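/- arXiv:2006.10519 — 2 statements merged into one kernel-verified Lean document; each statement's English description precedes it below -/
import Mathlib

section
/- Let G be a finite ℤ-gain graph that is (2,3,1)-sparse, and let H and K be (2,3,1)-tight subgraphs of G that are both unbalanced and satisfy V(H) ∩ V(K) ≠ ∅. Then both H ∩ K and H ∪ K are unbalanced and (2,3,1)-tight. -/
/-- A `ℤ`-gain graph: a multigraph with source and target maps together with a
gain map into `ℤ`. -/
structure GainGraph (V : Type*) (E : Type*) where
  src : E → V
  tgt : E → V
  gain : E → ℤ

/-- A subgraph of a gain graph: subsets of vertices and edges such that the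
endvertices of each chosen edge are chosen. -/
structure GainGraph.Subgraph {V E : Type*} (G : GainGraph V E) where
  verts : Set V
  edges : Set E
  src_mem : ∀ e ∈ edges, G.src e ∈ verts
  tgt_mem : ∀ e ∈ edges, G.tgt e ∈ verts

namespace GainGraph

variable {V E : Type*} {G : GainGraph V E}

/-- The union of two subgraphs, taken componentwise. -/
def Subgraph.union (H K : G.Subgraph) : G.Subgraph where
  verts := H.verts ∪ K.verts
  edges := H.edges ∪ K.edges
  src_mem := by
    rintro e (he | he)
    exacts [Or.inl (H.src_mem e he), Or.inr (K.src_mem e he)]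
  tgt_mem := by
    rintro e (he | he)
    exacts [Or.inl (H.tgt_mem e he), Or.inr (K.tgt_mem e he)]

/-- The intersection of two subgraphs, taken componentwise. -/
def Subgraph.inter (H K : G.Subgraph) : G.Subgraph where
  verts := H.verts ∩ K.verts
  edges := H.edges ∩ K.edges
  src_mem := fun e he => ⟨H.src_mem e he.1, K.src_mem e he.2⟩
  tgt_mem := fun e he => ⟨H.tgt_mem e he.1, K.tgt_mem e he.2⟩

/-- The whole gain graph, viewed as a subgraph of itself. -/
def top (G : GainGraph V E) : G.Subgraph where
  verts := Set.univ
  edges := Set.univ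
  src_mem := fun _ _ => Set.mem_univ _
  tgt_mem := fun _ _ => Set.mem_univ _

/-- Walks in a subgraph `H` of a gain graph, traversing edges of `H` either
forwards or backwards. -/
inductive Walk (G : GainGraph V E) (H : G.Subgraph) : V → V → Type _
  | nil (v : V) (hv : v ∈ H.verts) : Walk G H v v
  | fwd (e : E) (he : e ∈ H.edges) {v : V} (w : Walk G H (G.tgt e) v) :
      Walk G H (G.src e) v
  | bwd (e : E) (he : e ∈ H.edges) {v : V} (w : Walk G H (G.src e) v) :
      Walk G H (G.tgt e) v

/-- The gain of a walk: the sum of the gains of the edges traversed forwards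
minus the sum of the gains of the edges traversed backwards. -/
def Walk.gainSum {H : G.Subgraph} : ∀ {u v : V}, Walk G H u v → ℤ
  | _, _, .nil _ _ => 0
  | _, _, .fwd e _ w => G.gain e + w.gainSum
  | _, _, .bwd e _ w => -G.gain e + w.gainSum

/-- A subgraph is balanced if every closed walk in it has gain `0`. -/
def Subgraph.Balanced (H : G.Subgraph) : Prop :=
  ∀ (v : V) (w : Walk G H v v), w.gainSum = 0

/-- A subgraph is connected if it is nonempty and any two of its vertices are
joined by a walk in it. -/
def Subgraph.Connected (H : G.Subgraph) : Prop :=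
  H.verts.Nonempty ∧ ∀ u ∈ H.verts, ∀ v ∈ H.verts, Nonempty (Walk G H u v)

/-- The count `f(H) = 2|V(H)| - |E(H)|` of a subgraph. -/
noncomputable def fCount (H : G.Subgraph) : ℤ :=
  2 * (H.verts.ncard : ℤ) - (H.edges.ncard : ℤ)

/-- A gain graph is `(2,3,l)`-sparse if `f(H) ≥ l` for every nonempty
subgraph `H` and `f(K) ≥ 3` for every balanced subgraph `K` with at least one
edge. -/
def Sparse (l : ℤ) (G : GainGraph V E) : Prop :=
  (∀ H : G.Subgraph, H.verts.Nonempty → l ≤ fCount H) ∧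
  (∀ H : G.Subgraph, H.Balanced → H.edges.Nonempty → 3 ≤ fCount H)

/-- A subgraph `H` of a `(2,3,l)`-sparse gain graph is `(2,3,l)`-tight if
`f(H) = l`, or `H` is balanced with `f(H) = 3`, or `H` is a single isolated
vertex. -/
def Subgraph.Tight (l : ℤ) (H : G.Subgraph) : Prop :=
  fCount H = l ∨ (H.Balanced ∧ fCount H = 3) ∨
    (∃ v, H.verts = {v} ∧ H.edges = ∅)

end GainGraph

open GainGraph

lemma balanced_of_edges_empty {V E : Type*} {G : GainGraph V E}
    (H : G.Subgraph) (h : H.edges = ∅) : H.Balanced := by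
  have key : ∀ {u v : V} (w : Walk G H u v), w.gainSum = 0 := by
    intro u v w
    induction w with
    | nil => rfl
    | fwd e he w ih => rw [h] at he; exact absurd he (Set.notMem_empty e)
    | bwd e he w ih => rw [h] at he; exact absurd he (Set.notMem_empty e)
  intro v w
  exact key w

lemma fcount_eq_one {V E : Type*} {G : GainGraph V E} {H : G.Subgraph}
    (hH : H.Tight 1) (hHu : ¬ H.Balanced) : fCount H = 1 := by
  rcases hH with h | ⟨hb, _⟩ | ⟨v, _, he⟩
  · exact h
  · exact absurd hb hHu
  · exact absurd (balanced_of_edges_empty H he) hHu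

lemma not_balanced_of_fcount_one {V E : Type*} {G : GainGraph V E}
    (hsp : Sparse 1 G) {L : G.Subgraph} (hf : fCount L = 1) : ¬ L.Balanced := by
  intro hb
  rcases L.edges.eq_empty_or_nonempty with he | he
  · have : (L.edges.ncard : ℤ) = 0 := by rw [he]; simp
    unfold fCount at hf
    omega
  · have := hsp.2 L hb he
    omega

/-- In a finite `(2,3,1)`-sparse `ℤ`-gain graph, if `H` and
`K` are unbalanced `(2,3,1)`-tight subgraphs with intersecting vertex sets,
then `H ∩ K` and `H ∪ K` are both unbalanced and `(2,3,1)`-tight. -/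
theorem stmt_16 {V E : Type*} [Fintype V] [Fintype E] (G : GainGraph V E)
    (hsp : Sparse 1 G) (H K : G.Subgraph)
    (hH : H.Tight 1) (hK : K.Tight 1)
    (hHu : ¬ H.Balanced) (hKu : ¬ K.Balanced)
    (hne : (H.verts ∩ K.verts).Nonempty) :
    (¬ (H.inter K).Balanced ∧ (H.inter K).Tight 1) ∧
      (¬ (H.union K).Balanced ∧ (H.union K).Tight 1) := by
  have hfH : fCount H = 1 := fcount_eq_one hH hHu
  have hfK : fCount K = 1 := fcount_eq_one hK hKu
  have h1 := Set.ncard_union_add_ncard_inter H.verts K.verts (Set.toFinite _) (Set.toFinite _)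
  have h2 := Set.ncard_union_add_ncard_inter H.edges K.edges (Set.toFinite _) (Set.toFinite _)
  have hmod : fCount (H.union K) + fCount (H.inter K) = 2 := by
    unfold fCount Subgraph.union Subgraph.inter at *
    simp only at *
    omega
  have hi1 : (1 : ℤ) ≤ fCount (H.inter K) := hsp.1 _ hne
  have hu1 : (1 : ℤ) ≤ fCount (H.union K) := by
    refine hsp.1 _ ?_
    obtain ⟨v, hv, _⟩ := hne
    exact ⟨v, Or.inl hv⟩
  have hfi : fCount (H.inter K) = 1 := by omega
  have hfu : fCount (H.union K) = 1 := by omega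
  exact ⟨⟨not_balanced_of_fcount_one hsp hfi, Or.inl hfi⟩,
    ⟨not_balanced_of_fcount_one hsp hfu, Or.inl hfu⟩⟩
end

section
/- Let G be a finite ℤ-gain graph that is (2,3,1)-sparse, and let H and K be (2,3,1)-tight subgraphs of G such that at least one of H, K is balanced and H ∩ K has at least one edge. Then H ∪ K is (2,3,1)-tight. -/
namespace GainGraph

variable {V E : Type*} {G : GainGraph V E}

namespace Walk

variable {L : G.Subgraph}

def append : ∀ {u v w : V}, Walk G L u v → Walk G L v w → Walk G L u w
  | _, _, _, .nil _ _, q => q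
  | _, _, _, .fwd e he p, q => .fwd e he (p.append q)
  | _, _, _, .bwd e he p, q => .bwd e he (p.append q)

theorem gainSum_append : ∀ {u v w : V} (p : Walk G L u v) (q : Walk G L v w),
    (p.append q).gainSum = p.gainSum + q.gainSum
  | _, _, _, .nil _ _, q => by simp [append, gainSum]
  | _, _, _, .fwd e he p, q => by rw [append, gainSum, gainSum, gainSum_append p q]; ring
  | _, _, _, .bwd e he p, q => by rw [append, gainSum, gainSum, gainSum_append p q]; ring

def reverse : ∀ {u v : V}, Walk G L u v → Walk G L v u
  | _, _, .nil v hv => .nil v hv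
  | _, _, .fwd e he p => p.reverse.append (.bwd e he (.nil _ (L.src_mem e he)))
  | _, _, .bwd e he p => p.reverse.append (.fwd e he (.nil _ (L.tgt_mem e he)))

theorem gainSum_reverse : ∀ {u v : V} (p : Walk G L u v), p.reverse.gainSum = -p.gainSum
  | _, _, .nil v hv => by simp [reverse, gainSum]
  | _, _, .fwd e he p => by simp [reverse, gainSum_append, gainSum_reverse p, gainSum]
  | _, _, .bwd e he p => by simp [reverse, gainSum_append, gainSum_reverse p, gainSum]

end Walk

namespace Subgraph

variable {L M H K : G.Subgraph}

def IsPotential (L : G.Subgraph) (θ : V → ℤ) : Prop :=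
  ∀ e ∈ L.edges, G.gain e = θ (G.tgt e) - θ (G.src e)

theorem IsPotential.mono {θ : V → ℤ} (hθ : M.IsPotential θ) (he : L.edges ⊆ M.edges) :
    L.IsPotential θ :=
  fun e h => hθ e (he h)

theorem IsPotential.gainSum_eq {θ : V → ℤ} (hθ : L.IsPotential θ) :
    ∀ {u v : V} (w : Walk G L u v), w.gainSum = θ v - θ u
  | _, _, .nil v hv => by simp [Walk.gainSum]
  | _, _, .fwd e he p => by rw [Walk.gainSum, hθ.gainSum_eq p, hθ e he]; ring
  | _, _, .bwd e he p => by rw [Walk.gainSum, hθ.gainSum_eq p, hθ e he]; ring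

theorem IsPotential.balanced {θ : V → ℤ} (hθ : L.IsPotential θ) : L.Balanced :=
  fun v w => by rw [hθ.gainSum_eq w, sub_self]

theorem Balanced.gainSum_eq (hL : L.Balanced) {u u' v : V} (hu : u = u')
    (w₁ : Walk G L u v) (w₂ : Walk G L u' v) : w₁.gainSum = w₂.gainSum := by
  subst hu
  have h := hL u (w₁.append w₂.reverse)
  rw [Walk.gainSum_append, Walk.gainSum_reverse] at h
  linarith

theorem exists_root (L : G.Subgraph) :
    ∃ r : V → V, (∀ v ∈ L.verts, Nonempty (Walk G L (r v) v)) ∧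
      ∀ e ∈ L.edges, r (G.src e) = r (G.tgt e) := by
  classical
  let s : Setoid L.verts :=
    ⟨fun x y => Nonempty (Walk G L x y),
      ⟨fun x => ⟨.nil x.1 x.2⟩, fun ⟨w⟩ => ⟨w.reverse⟩, fun ⟨w⟩ ⟨w'⟩ => ⟨w.append w'⟩⟩⟩
  refine ⟨fun v => if h : v ∈ L.verts then (Quotient.out (s := s) ⟦⟨v, h⟩⟧).1 else v,
    fun v hv => ?_, fun e he => ?_⟩
  · simp only [dif_pos hv]
    exact Quotient.exact (Quotient.out_eq (s := s) ⟦⟨v, hv⟩⟧)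
  · have hs := L.src_mem e he
    have ht := L.tgt_mem e he
    have hcls : (⟦⟨G.src e, hs⟩⟧ : Quotient s) = ⟦⟨G.tgt e, ht⟩⟧ :=
      Quotient.sound ⟨.fwd e he (.nil _ ht)⟩
    simp only [dif_pos hs, dif_pos ht, hcls]

theorem Balanced.exists_isPotential (hL : L.Balanced) : ∃ θ, L.IsPotential θ := by
  classical
  obtain ⟨r, hr_walk, hr_edge⟩ := L.exists_root
  refine ⟨fun v => if h : v ∈ L.verts then (hr_walk v h).some.gainSum else 0, fun e he => ?_⟩
  have hs := L.src_mem e he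
  have ht := L.tgt_mem e he
  have h := hL.gainSum_eq (hr_edge e he)
    ((hr_walk _ hs).some.append (.fwd e he (.nil _ ht))) (hr_walk _ ht).some
  rw [Walk.gainSum_append] at h
  simp only [Walk.gainSum, add_zero] at h
  simp only [dif_pos hs, dif_pos ht]
  linarith

theorem Balanced.mono (hM : M.Balanced) (he : L.edges ⊆ M.edges) : L.Balanced :=
  let ⟨_, hθ⟩ := hM.exists_isPotential
  (hθ.mono he).balanced

/-- Potentials of `H` and `K` agree up to a constant on the connected intersection, so after
shifting one of them they glue to a potential of `H ∪ K`. -/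
theorem Balanced.union (hH : H.Balanced) (hK : K.Balanced) (hI : (H.inter K).Connected) :
    (H.union K).Balanced := by
  classical
  obtain ⟨θH, hθH⟩ := hH.exists_isPotential
  obtain ⟨θK, hθK⟩ := hK.exists_isPotential
  obtain ⟨v₀, hv₀⟩ := hI.1
  set c := θH v₀ - θK v₀
  have hshift : ∀ v ∈ (H.inter K).verts, θH v = θK v + c := by
    intro v hv
    obtain ⟨w⟩ := hI.2 v₀ hv₀ v hv
    have hH' := (hθH.mono Set.inter_subset_left).gainSum_eq w
    have hK' := (hθK.mono Set.inter_subset_right).gainSum_eq w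
    linarith
  have hglue : ∀ v ∈ K.verts, (if v ∈ H.verts then θH v else θK v + c) = θK v + c := by
    intro v hv
    split_ifs with h
    exacts [hshift v ⟨h, hv⟩, rfl]
  refine IsPotential.balanced (θ := fun v => if v ∈ H.verts then θH v else θK v + c) ?_
  rintro e (he | he) <;> beta_reduce
  · simp only [if_pos (H.src_mem e he), if_pos (H.tgt_mem e he)]
    exact hθH e he
  · rw [hglue _ (K.tgt_mem e he), hglue _ (K.src_mem e he), hθK e he]
    ring

theorem connected_of_forall_walk {u : V} (hu : u ∈ L.verts)
    (h : ∀ v ∈ L.verts, Nonempty (Walk G L u v)) : L.Connected :=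
  ⟨⟨u, hu⟩, fun x hx y hy =>
    let ⟨p⟩ := h x hx
    let ⟨q⟩ := h y hy
    ⟨p.reverse.append q⟩⟩

def restrict (L : G.Subgraph) (R : Set V) (hR : ∀ e ∈ L.edges, G.src e ∈ R ↔ G.tgt e ∈ R) :
    G.Subgraph where
  verts := L.verts ∩ R
  edges := L.edges ∩ G.src ⁻¹' R
  src_mem e he := ⟨L.src_mem e he.1, he.2⟩
  tgt_mem e he := ⟨L.tgt_mem e he.1, (hR e he.1).1 he.2⟩

theorem Balanced.restrict (hL : L.Balanced) (R : Set V)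
    (hR : ∀ e ∈ L.edges, G.src e ∈ R ↔ G.tgt e ∈ R) : (L.restrict R hR).Balanced :=
  hL.mono Set.inter_subset_left

section Count

variable [Finite V] [Finite E]

theorem fCount_restrict_add_restrict_compl (L : G.Subgraph) (R : Set V)
    (hR : ∀ e ∈ L.edges, G.src e ∈ R ↔ G.tgt e ∈ R) :
    fCount (L.restrict R hR) + fCount (L.restrict Rᶜ fun e he => not_congr (hR e he)) =
      fCount L := by
  have hv := Set.ncard_inter_add_ncard_sdiff_eq_ncard L.verts R
  have he := Set.ncard_inter_add_ncard_sdiff_eq_ncard L.edges (G.src ⁻¹' R)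
  simp only [fCount, restrict, Set.preimage_compl, ← Set.sdiff_eq]
  linarith

theorem fCount_union_add_inter (H K : G.Subgraph) :
    fCount (H.union K) + fCount (H.inter K) = fCount H + fCount K := by
  have hv := Set.ncard_union_add_ncard_inter H.verts K.verts
  have he := Set.ncard_union_add_ncard_inter H.edges K.edges
  simp only [fCount, union, inter]
  linarith

end Count

variable {l : ℤ}

theorem two_le_fCount_of_balanced [Finite V] (hsp : Sparse l G) (hL : L.Balanced)
    (hne : L.verts.Nonempty) : 2 ≤ fCount L := by
  rcases L.edges.eq_empty_or_nonempty with he | he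
  · have := (Set.ncard_pos).2 hne
    simp only [fCount, he, Set.ncard_empty]
    omega
  · linarith [hsp.2 L hL he]

/-- The component of `e` in `L` counts at least 3 and the nonempty rest at least 2. -/
theorem five_le_fCount_of_not_connected [Finite V] [Finite E] (hsp : Sparse l G)
    (hL : L.Balanced) {e : E} (he : e ∈ L.edges) (hconn : ¬L.Connected) : 5 ≤ fCount L := by
  obtain ⟨v, hv, hnw⟩ : ∃ v ∈ L.verts, IsEmpty (Walk G L (G.src e) v) := by
    by_contra! h
    exact hconn (connected_of_forall_walk (L.src_mem e he) h)
  set R := {x | Nonempty (Walk G L (G.src e) x)}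
  have hR : ∀ f ∈ L.edges, G.src f ∈ R ↔ G.tgt f ∈ R := fun f hf =>
    ⟨fun ⟨p⟩ => ⟨p.append (.fwd f hf (.nil _ (L.tgt_mem f hf)))⟩,
      fun ⟨p⟩ => ⟨p.append (.bwd f hf (.nil _ (L.src_mem f hf)))⟩⟩
  have hsplit := L.fCount_restrict_add_restrict_compl R hR
  have hcomp : 3 ≤ fCount (L.restrict R hR) :=
    hsp.2 _ (hL.restrict R hR) ⟨e, he, ⟨.nil _ (L.src_mem e he)⟩⟩
  have hrest := two_le_fCount_of_balanced hsp (hL.restrict Rᶜ fun f hf => not_congr (hR f hf)) ⟨v, hv, not_nonempty_iff.2 hnw⟩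
  linarith

theorem Tight.fCount_eq_three (hsp : Sparse l G) (hl : l ≤ 3) (hH : H.Tight l)
    (hbal : H.Balanced) (he : H.edges.Nonempty) : fCount H = 3 := by
  have h3 := hsp.2 H hbal he
  rcases hH with h | ⟨_, h⟩ | ⟨_, _, hempty⟩
  · omega
  · exact h
  · simp [hempty] at he

theorem union_comm (H K : G.Subgraph) : H.union K = K.union H := by
  cases H; cases K; simp only [union, Set.union_comm]

/-- Writing `f(H ∪ K) = f(H) + f(K) - f(H ∩ K)` with `f(H) = 3`: either `f(K) = 1` and
`f(H ∩ K) ≥ 3`, or `K` is balanced and the union is balanced (connected intersection) or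
`f(H ∩ K) ≥ 5` (disconnected intersection). -/
theorem Tight.union_of_balanced_left [Finite V] [Finite E] (hsp : Sparse 1 G)
    (hH : H.Tight 1) (hK : K.Tight 1) (hHbal : H.Balanced) {e : E}
    (he : e ∈ (H.inter K).edges) : (H.union K).Tight 1 := by
  have hIbal : (H.inter K).Balanced := hHbal.mono Set.inter_subset_left
  have hfH := hH.fCount_eq_three hsp (by norm_num) hHbal ⟨e, he.1⟩
  have hfU : 1 ≤ fCount (H.union K) := hsp.1 _ ⟨_, Or.inl (H.src_mem e he.1)⟩
  have hfI := hsp.2 _ hIbal ⟨e, he⟩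
  have hmod := fCount_union_add_inter H K
  rcases hK with hfK | ⟨hKbal, hfK⟩ | ⟨_, _, hempty⟩
  · exact Or.inl (by linarith)
  · by_cases hconn : (H.inter K).Connected
    · have hUbal := hHbal.union hKbal hconn
      have := hsp.2 _ hUbal ⟨e, Or.inl he.1⟩
      exact Or.inr (Or.inl ⟨hUbal, by linarith⟩)
    · have := five_le_fCount_of_not_connected hsp hIbal he hconn
      exact Or.inl (by linarith)
  · exact absurd he.2 (hempty ▸ Set.notMem_empty e)

end Subgraph

end GainGraph

open GainGraph

/-- In a finite `(2,3,1)`-sparse `ℤ`-gain graph, if `H` and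
`K` are `(2,3,1)`-tight subgraphs, at least one of which is balanced, whose
intersection has at least one edge, then `H ∪ K` is `(2,3,1)`-tight. -/
theorem stmt_17 {V E : Type*} [Fintype V] [Fintype E] (G : GainGraph V E)
    (hsp : Sparse 1 G) (H K : G.Subgraph)
    (hH : H.Tight 1) (hK : K.Tight 1)
    (hbal : H.Balanced ∨ K.Balanced)
    (hedge : (H.inter K).edges.Nonempty) :
    (H.union K).Tight 1 := by
  obtain ⟨e, heH, heK⟩ := hedge
  rcases hbal with hHbal | hKbal
  · exact hH.union_of_balanced_left hsp hK hHbal ⟨heH, heK⟩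
  · rw [Subgraph.union_comm]
    exact hK.union_of_balanced_left hsp hH hKbal ⟨heK, heH⟩
end
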